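/- For every natural number m, the game *m + * equals *(m ⊕ 1) under misère equality: for every impartial game X, the games *m + * + X and *(m ⊕ 1) + X have the same misère outcome. Here ⊕ denotes bitwise XOR. -/

import Mathlib

/-! Combinatorial game theory (`SetTheory.PGame`, its sum, `nim`, `Impartial`) has been
removed from Mathlib; the notions used below are re-declared here with their old
(December 2024 Mathlib) meaning. -/

universe u

namespace SetTheory

/-- Pre-games, as in the old Mathlib. -/
inductive PGame : Type (u + 1)
  | mk : ∀ α β : Type u, (α → PGame) → (β → PGame) → PGame

namespace PGame

/-- Left options. -/
def LeftMoves : PGame → Type u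
  | mk l _ _ _ => l

/-- Right options. -/
def RightMoves : PGame → Type u
  | mk _ r _ _ => r

/-- Left move. -/
def moveLeft : ∀ g : PGame, LeftMoves g → PGame
  | mk _l _ L _ => L

/-- Right move. -/
def moveRight : ∀ g : PGame, RightMoves g → PGame
  | mk _ _r _ R => R

/-- The pair `(x ≤ y, x ⧏ y)`, defined by simultaneous recursion as in the old Mathlib:
`x ≤ y` iff every `xL i ⧏ y` and every `x ⧏ yR j`; `x ⧏ y` iff some `x ≤ yL i` or
some `xR j ≤ y`. -/
noncomputable def leLF (x : PGame.{u}) : PGame.{u} → Prop × Prop := by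
  induction x with
  | mk xl xr xL xR IHxl IHxr =>
    intro y
    induction y with
    | mk yl yr yL yR IHyl IHyr =>
      exact (((∀ i, (IHxl i (mk yl yr yL yR)).2) ∧ ∀ j, (IHyr j).2),
        ((∃ i, (IHyl i).1) ∨ ∃ j, (IHxr j (mk yl yr yL yR)).1))

instance : LE PGame.{u} :=
  ⟨fun x y => (leLF x y).1⟩

/-- Equivalence of pre-games: `x ≤ y ∧ y ≤ x`. -/
def Equiv (x y : PGame.{u}) : Prop :=
  x ≤ y ∧ y ≤ x

instance : HasEquiv PGame.{u} :=
  ⟨Equiv⟩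

/-- Negation of a pre-game. -/
def neg : PGame.{u} → PGame.{u}
  | ⟨l, r, L, R⟩ => ⟨r, l, fun i => neg (R i), fun i => neg (L i)⟩

instance : Neg PGame.{u} :=
  ⟨neg⟩

/-- Disjunctive sum of pre-games. -/
noncomputable instance : Add PGame.{u} :=
  ⟨fun x y => by
    induction x generalizing y with | mk xl xr _ _ IHxl IHxr => _
    induction y with | mk yl yr yL yR IHyl IHyr => _
    have y := mk yl yr yL yR
    refine ⟨xl ⊕ yl, xr ⊕ yr, Sum.rec ?_ ?_, Sum.rec ?_ ?_⟩
    · exact fun i => IHxl i y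
    · exact IHyl
    · exact fun i => IHxr i y
    · exact IHyr⟩

/-- Auxiliary for impartiality. -/
def ImpartialAux : PGame.{u} → Prop
  | mk l r L R => (mk l r L R ≈ -mk l r L R) ∧ (∀ i, ImpartialAux (L i)) ∧
      ∀ j, ImpartialAux (R j)

/-- Impartial pre-games. -/
class Impartial (G : PGame.{u}) : Prop where
  out : ImpartialAux G

/-- The nim game `nim o`, as in the old Mathlib. -/
noncomputable def nim (o : Ordinal.{u}) : PGame.{u} :=
  ⟨o.ToType, o.ToType,
    fun x => nim ((Ordinal.ToType.mk (o := o)).symm x).val,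
    fun x => nim ((Ordinal.ToType.mk (o := o)).symm x).val⟩
termination_by o
decreasing_by all_goals exact ((Ordinal.ToType.mk (o := o)).symm x).prop

end PGame

end SetTheory

open SetTheory PGame

/-- `G` is a misère P-position: `G` has at least one option and every option of `G` is a
misère N-position (i.e. not a misère P-position).  In particular the empty game `0` is a
misère N-position.  (For an impartial game the options are the left moves.) -/
def MisereP : PGame → Prop
  | PGame.mk l _ L _ => Nonempty l ∧ ∀ i, ¬ MisereP (L i)

/-!
We induct on `m` and on `X`. The options of `*m + * + X` are `*k + * + X` for `k < m`, which by
induction have the misère outcome of `*(k ⊕ 1) + X`, together with `*m + X` and the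
`*m + * + X'` for options `X'` of `X`.
Since `k ↦ k ⊕ 1` permutes `{0, …, 2a - 1}`, for `m = 2a` these have exactly the outcomes of the
options of `*(2a + 1) + X`. For `m = 2a + 1` they are the options of `*2a + X` together with
`*(2a + 1) + X`, which is an N-position whenever `*2a + X` is a P-position; in the remaining case
`a = 0` with `X` empty, the extra option `*1 + X` is a P-position while `*0 + X` has no options,
so both games are N-positions.
-/

namespace Nat

theorem xor_one_lt_two_mul_iff {k a : ℕ} : k ^^^ 1 < 2 * a ↔ k < 2 * a := by
  rcases Nat.even_or_odd k with hk | hk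
  · rw [xor_one_of_even hk]; obtain ⟨b, rfl⟩ := hk; omega
  · rw [xor_one_of_odd hk]; obtain ⟨b, rfl⟩ := hk; omega

theorem forall_lt_two_mul_xor_one {a : ℕ} {p : ℕ → Prop} :
    (∀ k < 2 * a, p (k ^^^ 1)) ↔ ∀ k < 2 * a, p k := by
  refine ⟨fun h k hk => ?_, fun h k hk => h _ (xor_one_lt_two_mul_iff.2 hk)⟩
  simpa only [xor_xor_cancel_right] using h (k ^^^ 1) (xor_one_lt_two_mul_iff.2 hk)

end Nat

namespace SetTheory.PGame

theorem nonempty_leftMoves_add {x y : PGame.{u}} :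
    Nonempty (x + y).LeftMoves ↔ Nonempty x.LeftMoves ∨ Nonempty y.LeftMoves := by
  cases x; cases y; exact nonempty_sum

theorem forall_leftMoves_add {x y : PGame.{u}} {p : PGame.{u} → Prop} :
    (∀ i, p ((x + y).moveLeft i)) ↔ (∀ i, p (x.moveLeft i + y)) ∧ ∀ j, p (x + y.moveLeft j) := by
  cases x; cases y; exact Sum.forall

theorem forall_leftMoves_nim {o : Ordinal.{u}} {p : PGame.{u} → Prop} :
    (∀ i, p ((nim o).moveLeft i)) ↔ ∀ o' < o, p (nim o') := by
  rw [nim]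
  exact (Ordinal.ToType.mk.toEquiv.forall_congr_left (p := fun a : Set.Iio o => p (nim a))).symm.trans
    Subtype.forall

theorem forall_leftMoves_nim_natCast {n : ℕ} {p : PGame.{u} → Prop} :
    (∀ i, p ((nim n).moveLeft i)) ↔ ∀ k < n, p (nim k) := by
  rw [forall_leftMoves_nim]
  refine ⟨fun h k hk => h k (by exact_mod_cast hk), fun h o ho => ?_⟩
  obtain ⟨k, rfl⟩ := Ordinal.lt_omega0.1 (ho.trans (Ordinal.natCast_lt_omega0 n))
  exact h k (by exact_mod_cast ho)

theorem forall_leftMoves_nim_one {p : PGame.{u} → Prop} :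
    (∀ i, p ((nim 1).moveLeft i)) ↔ p (nim 0) := by
  simp only [forall_leftMoves_nim, Order.lt_one_iff, forall_eq]

theorem nonempty_leftMoves_nim {o : Ordinal.{u}} : Nonempty (nim o).LeftMoves ↔ o ≠ 0 := by
  rw [nim]; exact Ordinal.nonempty_toType_iff

instance isEmpty_leftMoves_nim_zero : IsEmpty (nim.{u} 0).LeftMoves :=
  not_nonempty_iff.1 (nonempty_leftMoves_nim.not_left.2 rfl)

end SetTheory.PGame

theorem misereP_iff {G : PGame.{u}} :
    MisereP G ↔ Nonempty G.LeftMoves ∧ ∀ i, ¬MisereP (G.moveLeft i) := by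
  cases G; rfl

theorem misereP_add_iff {G H : PGame.{u}} :
    MisereP (G + H) ↔ (Nonempty G.LeftMoves ∨ Nonempty H.LeftMoves) ∧
      (∀ i, ¬MisereP (G.moveLeft i + H)) ∧ ∀ j, ¬MisereP (G + H.moveLeft j) := by
  rw [misereP_iff, nonempty_leftMoves_add, forall_leftMoves_add (p := fun G => ¬MisereP G)]

theorem misereP_add_add_of_isEmpty {H : PGame.{u}} [IsEmpty H.LeftMoves] (G X : PGame.{u}) :
    MisereP (G + H + X) ↔ MisereP (G + X) := by
  induction G generalizing X with | mk l r L R ihG =>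
  induction X with | mk xl xr XL XR ihX =>
  rw [misereP_add_iff, misereP_add_iff, nonempty_leftMoves_add,
    forall_leftMoves_add (p := fun G => ¬MisereP (G + _))]
  simp only [not_nonempty_iff.2 ‹IsEmpty H.LeftMoves›, or_false, IsEmpty.forall_iff, and_true]
  exact and_congr_right' <|
    and_congr (forall_congr' fun i => (ihG i _).not) (forall_congr' fun j => (ihX j).not)

theorem misereP_nim_add_iff {n : ℕ} {X : PGame.{u}} :
    MisereP (nim n + X) ↔ (n ≠ 0 ∨ Nonempty X.LeftMoves) ∧
      (∀ k < n, ¬MisereP (nim k + X)) ∧ ∀ j, ¬MisereP (nim n + X.moveLeft j) := by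
  rw [misereP_add_iff, nonempty_leftMoves_nim, Nat.cast_ne_zero,
    forall_leftMoves_nim_natCast (p := fun G => ¬MisereP (G + X))]

theorem not_misereP_nim_add_of_lt {k n : ℕ} {X : PGame.{u}} (hkn : k < n)
    (hk : MisereP (nim k + X)) : ¬MisereP (nim n + X) :=
  fun hn => (misereP_nim_add_iff.1 hn).2.1 k hkn hk

theorem misereP_nim_one_add_of_isEmpty {X : PGame.{u}} [IsEmpty X.LeftMoves] :
    MisereP (nim 1 + X) := by
  rw [← Nat.cast_one, misereP_nim_add_iff]
  refine ⟨Or.inl one_ne_zero, ?_, isEmptyElim⟩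
  intro k hk hP
  obtain rfl : k = 0 := Nat.lt_one_iff.1 hk
  rcases (misereP_add_iff.1 hP).1 with h | h
  · exact nonempty_leftMoves_nim.1 h Nat.cast_zero
  · exact not_nonempty_iff.2 ‹_› h

theorem misereP_nim_add_nim_one_add_iff {m : ℕ} {X : PGame.{u}} :
    MisereP (nim m + nim 1 + X) ↔ (∀ k < m, ¬MisereP (nim k + nim 1 + X)) ∧
      ¬MisereP (nim m + X) ∧ ∀ j, ¬MisereP (nim m + nim 1 + X.moveLeft j) := by
  rw [misereP_add_iff, forall_leftMoves_add (p := fun G => ¬MisereP (G + X)),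
    forall_leftMoves_nim_natCast (p := fun G => ¬MisereP (G + nim 1 + X)),
    forall_leftMoves_nim_one (p := fun G => ¬MisereP (nim m + G + X)), misereP_add_add_of_isEmpty]
  simp [nonempty_leftMoves_add, nonempty_leftMoves_nim, and_assoc]

theorem misereP_nim_xor_one_add_iff {m : ℕ} {X : PGame.{u}} :
    MisereP (nim (m ^^^ 1 : ℕ) + X) ↔ (∀ k < m, ¬MisereP (nim (k ^^^ 1 : ℕ) + X)) ∧
      ¬MisereP (nim m + X) ∧ ∀ j, ¬MisereP (nim (m ^^^ 1 : ℕ) + X.moveLeft j) := by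
  obtain ⟨a, rfl | rfl⟩ := Nat.even_or_odd' m
  · rw [Nat.xor_one_of_even (even_two_mul a), misereP_nim_add_iff, Nat.forall_lt_succ_right,
      Nat.forall_lt_two_mul_xor_one (p := fun k => ¬MisereP (nim k + X))]
    simp only [ne_eq, Nat.add_one_ne_zero, not_false_eq_true, true_or, true_and, and_assoc]
  · have hxor : (2 * a + 1) ^^^ 1 = 2 * a := by
      rw [Nat.xor_one_of_odd (odd_two_mul_add_one a), Nat.add_sub_cancel]
    rw [hxor, Nat.forall_lt_succ_right, Nat.xor_one_of_even (even_two_mul a),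
      Nat.forall_lt_two_mul_xor_one (p := fun k => ¬MisereP (nim k + X))]
    constructor
    · intro h
      obtain ⟨-, hlt, hopt⟩ := misereP_nim_add_iff.1 h
      exact ⟨⟨hlt, not_misereP_nim_add_of_lt (Nat.lt_succ_self _) h⟩,
        not_misereP_nim_add_of_lt (Nat.lt_succ_self _) h, hopt⟩
    · rintro ⟨⟨hlt, hsucc⟩, -, hopt⟩
      refine misereP_nim_add_iff.2 ⟨?_, hlt, hopt⟩
      by_contra! ⟨ha, hX⟩
      apply hsucc
      rw [ha, zero_add, Nat.cast_one]
      exact misereP_nim_one_add_of_isEmpty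

theorem misereP_nim_add_nim_one_add_iff_nim_xor_one_add (m : ℕ) (X : PGame.{u}) :
    MisereP (nim m + nim 1 + X) ↔ MisereP (nim (m ^^^ 1 : ℕ) + X) := by
  induction X generalizing m with | mk xl xr XL XR ihX =>
  induction m using Nat.strong_induction_on with | _ m ihm =>
  rw [misereP_nim_add_nim_one_add_iff, misereP_nim_xor_one_add_iff]
  exact and_congr (forall₂_congr fun k hk => (ihm k hk).not) <|
    and_congr_right' <| forall_congr' fun j => (ihX j m).not

/-- For every natural number `m`, the game `*m + *` equals `*(m ^^^ 1)` under misère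
equality: for every impartial game `X`, the games `*m + * + X` and `*(m ^^^ 1) + X`
have the same misère outcome.  (Here `* = *1` and `^^^` is bitwise XOR.) -/
theorem nim_add_star_misere (m : ℕ) :
    ∀ X : PGame.{0}, X.Impartial →
      (MisereP (nim (m : Ordinal) + nim (1 : Ordinal) + X) ↔
        MisereP (nim ((m ^^^ 1 : ℕ) : Ordinal) + X)) :=
  fun X _ => misereP_nim_add_nim_one_add_iff_nim_xor_one_add m X
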